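/- Let A be a serial finite length abelian category, let X be an indecomposable object of A, let Y₁, …, Y_m be indecomposable objects of A, and let f : Y₁ ⊞ ⋯ ⊞ Y_m → X be a morphism with components f_i : Y_i → X. Then f is an epimorphism if and only if at least one of the components f_i is an epimorphism. -/

import Mathlib

/-!
An indecomposable object of a serial category is uniserial, so the images of the components
`f_i` form a chain of subobjects of `X`. The largest of them contains the image of every
component, hence the image of `f`; if `f` is epi, that largest image is all of `X`, i.e. the
corresponding component is epi.
-/

open CategoryTheory CategoryTheory.Limits

universe v u

attribute [local instance] CategoryTheory.Abelian.hasFiniteBiproducts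

variable {A : Type u} [Category.{v} A] [Abelian A]

/-- An object is uniserial if its subobjects are totally ordered by inclusion. -/
def Uniserial (U : A) : Prop :=
  ∀ P Q : Subobject U, P ≤ Q ∨ Q ≤ P

/-- A category is serial if every object is isomorphic to a finite biproduct of
uniserial objects. -/
def IsSerial (A : Type u) [Category.{v} A] [Abelian A] : Prop :=
  ∀ X : A, ∃ (m : ℕ) (Y : Fin m → A),
    (∀ i, Uniserial (Y i)) ∧ Nonempty (X ≅ ⨁ Y)

/-- An object is indecomposable if it is nonzero and in any decomposition as a
biproduct one of the summands is zero. -/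
def Indec (X : A) : Prop :=
  ¬ IsZero X ∧ ∀ B C : A, Nonempty (X ≅ B ⊞ C) → IsZero B ∨ IsZero C

section

variable {C : Type*} [Category C] [Preadditive C]

lemma isZero_biproduct_of_isEmpty {J : Type} [IsEmpty J] (Z : J → C) [HasBiproduct Z] :
    IsZero (⨁ Z) :=
  (IsZero.iff_id_eq_zero _).mpr (biproduct.hom_ext _ _ isEmptyElim)

noncomputable def biproductFinSuccIso [HasFiniteBiproducts C] [HasBinaryBiproducts C]
    {n : ℕ} (Z : Fin (n + 1) → C) :
    ⨁ Z ≅ Z 0 ⊞ ⨁ (fun i : Fin n => Z i.succ) where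
  hom := biprod.lift (biproduct.π Z 0) (biproduct.lift fun i => biproduct.π Z i.succ)
  inv := biprod.desc (biproduct.ι Z 0) (biproduct.desc fun i => biproduct.ι Z i.succ)
  hom_inv_id := by
    rw [biprod.lift_desc, biproduct.lift_desc, ← biproduct.total, Fin.sum_univ_succ]
  inv_hom_id := by
    ext <;> simp [biproduct.ι_π, eq_comm, Fin.succ_ne_zero]

end

lemma Uniserial.of_iso {C : Type*} [Category C] {X Y : C} (e : X ≅ Y) (h : Uniserial Y) :
    Uniserial X := by
  intro P Q
  simpa only [(Subobject.mapIsoToOrderIso e).le_iff_le] using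
    h (Subobject.mapIsoToOrderIso e P) (Subobject.mapIsoToOrderIso e Q)

lemma Indec.exists_iso_of_iso_biproduct {X : A} (hX : Indec X) :
    ∀ {n : ℕ} (Z : Fin n → A), (X ≅ ⨁ Z) → ∃ i, Nonempty (X ≅ Z i)
  | 0, Z, e => (hX.1 ((isZero_biproduct_of_isEmpty Z).of_iso e)).elim
  | n + 1, Z, e => by
    let e' := e ≪≫ biproductFinSuccIso Z
    rcases hX.2 _ _ ⟨e'⟩ with hZ₀ | hRest
    · obtain ⟨i, ⟨e''⟩⟩ := hX.exists_iso_of_iso_biproduct (fun i : Fin n => Z i.succ)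
        (e' ≪≫ (isoZeroBiprod hZ₀).symm)
      exact ⟨i.succ, ⟨e''⟩⟩
    · exact ⟨0, ⟨e' ≪≫ (isoBiprodZero hRest).symm⟩⟩

lemma IsSerial.uniserial_of_indec (hser : IsSerial A) {X : A} (hX : Indec X) : Uniserial X := by
  obtain ⟨n, Z, hZ, ⟨e⟩⟩ := hser X
  obtain ⟨i, ⟨e'⟩⟩ := hX.exists_iso_of_iso_biproduct Z e
  exact (hZ i).of_iso e'

lemma Uniserial.exists_forall_le {C : Type*} [Category C] {X : C} (hX : Uniserial X)
    {ι : Type*} [Finite ι] [Nonempty ι] (P : ι → Subobject X) : ∃ j, ∀ i, P i ≤ P j :=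
  have hdir : Directed (· ≤ ·) P := fun i j =>
    (hX (P i) (P j)).elim (fun h => ⟨j, h, le_rfl⟩) (fun h => ⟨i, le_rfl, h⟩)
  hdir.finite_le id

lemma Subobject.factors_of_forall_factors_biproduct_ι_comp {C : Type*} [Category C]
    [Preadditive C] {J : Type} [Finite J] {Y : J → C} [HasBiproduct Y] {X : C}
    {P : Subobject X} (f : ⨁ Y ⟶ X) (h : ∀ i, P.Factors (biproduct.ι Y i ≫ f)) :
    P.Factors f :=
  (Subobject.factors_iff _ _).mpr
    ⟨biproduct.desc fun i => P.factorThru _ (h i), by ext; simp⟩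

theorem epi_iff_exists_component_epi
    -- `A` is a serial finite length abelian category
    [∀ X : A, IsArtinianObject X] [∀ X : A, IsNoetherianObject X]
    (hser : IsSerial A)
    (X : A) (hX : Indec X) (m : ℕ) (Y : Fin m → A) (hY : ∀ i, Indec (Y i))
    (f : ⨁ Y ⟶ X) :
    Epi f ↔ ∃ i, Epi (biproduct.ι Y i ≫ f) := by
  refine ⟨fun hf => ?_, fun ⟨i, _⟩ => epi_of_epi (biproduct.ι Y i) f⟩
  cases isEmpty_or_nonempty (Fin m) with
  | inl _ => exact (hX.1 ((isZero_biproduct_of_isEmpty Y).of_epi f)).elim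
  | inr _ =>
    let P i := imageSubobject (biproduct.ι Y i ≫ f)
    obtain ⟨j, hj⟩ := (hser.uniserial_of_indec hX).exists_forall_le P
    have hfac : (P j).Factors f :=
      Subobject.factors_of_forall_factors_biproduct_ι_comp f fun i =>
        Subobject.factors_of_le _ (hj i) ((Subobject.factors_iff _ _).mpr
          ⟨factorThruImageSubobject _, imageSubobject_arrow_comp _⟩)
    have : Epi (P j).arrow := epi_of_epi_fac (Subobject.factorThru_arrow _ f hfac)
    refine ⟨j, ?_⟩
    rw [← imageSubobject_arrow_comp (biproduct.ι Y j ≫ f)]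
    infer_instance
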